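/- arXiv:1905.08981 — 5 statements merged into one kernel-verified Lean document; each statement's English description precedes it below -/
import Mathlib

section
/- Let v : ℤ≥0 → ℤ≥0 satisfy v(m)/m → 0 as m → ∞, and let ρ : Z × Z → ℝ≥0 be a symmetric kernel vanishing only on the diagonal with ρ(x,z) ≤ exp(v(min(−log ρ(x,y), −log ρ(y,z)))) · max(ρ(x,y), ρ(y,z)) for all x,y,z. Setting E_n = {(x,y) : ρ(x,y) ≤ e^{-n}}, for every n ∈ ℤ there exists m ∈ ℤ such that (x,y) ∈ E_m and (y,z) ∈ E_m imply (x,z) ∈ E_n; indeed m = max(2n, 2·sup{m' : v(m') ≥ m'/2}) works. -/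
/-! If `ρ x y, ρ y z ≤ e^{-t}` with `t ≥ m`, the quasi-triangle inequality gives
`ρ x z ≤ e^{v ⌊t⌋ - t}`. Sublinearity of `v` makes `2 v k < k` for all large `k`, so once `m`
is large this is at most `e^{-t/2} ≤ e^{-m/2}`, and `m ≥ 2n` finishes. -/

open Real Filter

lemma eventually_two_mul_lt_of_tendsto_div_zero {v : ℕ → ℕ}
    (hv : Tendsto (fun m : ℕ => (v m : ℝ) / m) atTop (nhds 0)) :
    ∀ᶠ m in atTop, 2 * v m < m := by
  filter_upwards [hv.eventually_lt_const (by norm_num : (0 : ℝ) < 1 / 2),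
    eventually_gt_atTop 0] with m hm hm0
  rw [div_lt_iff₀ (by exact_mod_cast hm0)] at hm
  exact_mod_cast (by linarith : (2 * v m : ℝ) < m)

lemma max_eq_exp_neg_min_neg_log {a b : ℝ} (ha : 0 < a) (hb : 0 < b) :
    max a b = exp (-min (-log a) (-log b)) := by
  rcases le_total a b with hab | hab
  · simp [max_eq_right hab, log_le_log ha hab, exp_log hb]
  · simp [max_eq_left hab, log_le_log hb hab, exp_log ha]

lemma exp_mul_exp_neg_le_of_two_mul_lt {v : ℕ → ℕ} {t : ℝ} (ht : 0 ≤ t)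
    (hv : 2 * v ⌊t⌋₊ < ⌊t⌋₊) : exp (v ⌊t⌋₊) * exp (-t) ≤ exp (-(t / 2)) := by
  rw [← exp_add, exp_le_exp]
  have hfloor := Nat.floor_le ht
  have hv' : (2 * v ⌊t⌋₊ : ℝ) < ⌊t⌋₊ := by exact_mod_cast hv
  linarith

theorem stmt_4_general {Z : Type*} (v : ℕ → ℕ)
    (hsub : Filter.Tendsto (fun m : ℕ => (v m : ℝ) / m) Filter.atTop (nhds 0))
    (ρ : Z → Z → ℝ) (hnn : ∀ x y, 0 ≤ ρ x y) (heq : ∀ x y, ρ x y = 0 ↔ x = y)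
    (htri : ∀ x y z : Z, x ≠ y → y ≠ z →
      ρ x z ≤ Real.exp (v ⌊min (-Real.log (ρ x y)) (-Real.log (ρ y z))⌋₊) *
        max (ρ x y) (ρ y z)) :
    ∀ n : ℤ, ∃ m : ℤ, ∀ x y z : Z,
      ρ x y ≤ Real.exp (-(m : ℝ)) → ρ y z ≤ Real.exp (-(m : ℝ)) →
      ρ x z ≤ Real.exp (-(n : ℝ)) := by
  intro n
  obtain ⟨M, hM⟩ := eventually_atTop.1 (eventually_two_mul_lt_of_tendsto_div_zero hsub)
  refine ⟨max (2 * n) M, fun x y z hxy hyz => ?_⟩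
  set m : ℤ := max (2 * n) M
  have h2nm : (2 * n : ℝ) ≤ m := by exact_mod_cast le_max_left (2 * n) (M : ℤ)
  have hMm : (M : ℝ) ≤ m := by exact_mod_cast le_max_right (2 * n) (M : ℤ)
  have hmn : exp (-(m : ℝ)) ≤ exp (-(n : ℝ)) :=
    exp_le_exp.2 (by linarith [M.cast_nonneg (α := ℝ)])
  rcases eq_or_ne x y with rfl | hxy'
  · exact hyz.trans hmn
  rcases eq_or_ne y z with rfl | hyz'
  · exact hxy.trans hmn
  have hpos : ∀ a b, a ≠ b → 0 < ρ a b := fun a b h => (hnn a b).lt_of_ne' (mt (heq a b).1 h)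
  have hlog : ∀ a b, a ≠ b → ρ a b ≤ exp (-(m : ℝ)) → (m : ℝ) ≤ -log (ρ a b) :=
    fun a b h hab => by linarith [(log_le_iff_le_exp (hpos a b h)).2 hab]
  set t := min (-log (ρ x y)) (-log (ρ y z))
  have hmt : (m : ℝ) ≤ t := le_min (hlog x y hxy' hxy) (hlog y z hyz' hyz)
  have ht : 0 ≤ t := by linarith [M.cast_nonneg (α := ℝ)]
  calc ρ x z ≤ exp (v ⌊t⌋₊) * max (ρ x y) (ρ y z) := htri x y z hxy' hyz'
    _ = exp (v ⌊t⌋₊) * exp (-t) := by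
      rw [max_eq_exp_neg_min_neg_log (hpos x y hxy') (hpos y z hyz')]
    _ ≤ exp (-(t / 2)) :=
      exp_mul_exp_neg_le_of_two_mul_lt ht (hM _ (Nat.le_floor (hMm.trans hmt)))
    _ ≤ exp (-(n : ℝ)) := exp_le_exp.2 (by linarith)

/-- sublinear quasi-triangle inequality `(△_{O(u)})` still yields the
composition axiom (U'_III) for the entourages `E_n = {ρ ≤ e^{-n}}`. -/
theorem stmt_4 {Z : Type*} (v : ℕ → ℕ)
    (hsub : Filter.Tendsto (fun m : ℕ => (v m : ℝ) / m) Filter.atTop (nhds 0))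
    (ρ : Z → Z → ℝ) (hnn : ∀ x y, 0 ≤ ρ x y) (heq : ∀ x y, ρ x y = 0 ↔ x = y)
    (hsymm : ∀ x y, ρ x y = ρ y x)
    (htri : ∀ x y z : Z, x ≠ y → y ≠ z →
      ρ x z ≤ Real.exp (v ⌊min (-Real.log (ρ x y)) (-Real.log (ρ y z))⌋₊) *
        max (ρ x y) (ρ y z)) :
    ∀ n : ℤ, ∃ m : ℤ, ∀ x y z : Z,
      ρ x y ≤ Real.exp (-(m : ℝ)) → ρ y z ≤ Real.exp (-(m : ℝ)) →
      ρ x z ≤ Real.exp (-(n : ℝ)) :=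
  stmt_4_general v hsub ρ hnn heq htri
end

section
/- Covering lemma for O(u)-quasisymmetric structures: let (Z, β, q, δ) be a set with an O(u)-quasisymmetric structure, let A ⊆ Z, and let 𝓑 ⊆ β be a countable cover of A (meaning the realizations of the balls in 𝓑 cover A) with inf_{b ∈ 𝓑} δ(b) > −∞. Then there exists 𝓒 ⊆ 𝓑 such that the realizations of distinct members of 𝓒 are pairwise disjoint, and the realizations of the shifted balls {q(δ(b)).b : b ∈ 𝓒} cover A. -/
/-- An `O(u)`-quasisymmetric structure on a set `Z` (Definition 1.1 of the paper):
abstract balls with a realization map, a level map `lev = δ`, a shift action of `ℕ`,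
satisfying (SC0), (SC1), (SC2) (with `q = O(u)`) and (SC3). -/
structure QSStruct (Z : Type*) where
  Ball : Type*
  rel : Ball → Set Z
  rel_nonempty : ∀ b, (rel b).Nonempty
  lev : Ball → ℤ
  shift : ℕ → Ball → Ball
  shift_add : ∀ k k' b, shift k' (shift k b) = shift (k' + k) b
  lev_shift : ∀ k b, lev (shift k b) = lev b - k
  subset_shift : ∀ k b, rel b ⊆ rel (shift k b)
  shift_mono : ∀ k b b', rel b ⊆ rel b' → rel (shift k b) ⊆ rel (shift k b')
  lev_antichain : ∀ b b', lev b < lev b' → ¬ rel b ⊆ rel b'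
  n₀ : ℤ
  q : ℤ → ℕ
  u : ℤ → ℝ
  q_bigO : ∃ C : ℝ, ∀ n : ℤ, n₀ ≤ n → (q n : ℝ) ≤ C * u n
  sc2 : ∀ b b', n₀ ≤ lev b → lev b ≤ lev b' → (rel b ∩ rel b').Nonempty →
    rel b' ⊆ rel (shift (q (lev b)) b)
  sc3 : ∀ x y : Z, x ≠ y → ∀ n : ℤ, ∃ b, n ≤ lev b ∧ x ∈ rel b ∧ y ∉ rel b

/-!
Levels bounded below make `2 ^ (-lev b)` a bounded radius, so Vitali's covering lemma yields a
disjoint subfamily `𝓒` such that every `b ∈ 𝓑` meets some `c ∈ 𝓒` of level at most `lev b`;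
(SC2) then puts `b` inside the shift of `c` by `q (lev c)`.
-/

open Set

theorem le_of_two_zpow_neg_le_mul {m n : ℤ} (h : (2 : ℝ) ^ (-m) ≤ 3 / 2 * 2 ^ (-n)) : n ≤ m := by
  by_contra! hmn
  have hpow : (2 : ℝ) ^ (-n) ≤ 2 ^ (-m) / 2 := by
    calc (2 : ℝ) ^ (-n) ≤ 2 ^ (-(m + 1)) := zpow_le_zpow_right₀ one_le_two (by omega)
      _ = 2 ^ (-m) / 2 := by rw [neg_add, zpow_add₀ two_ne_zero]; norm_num [div_eq_mul_inv]
  have hpos : (0 : ℝ) < 2 ^ (-m) := zpow_pos two_pos _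
  linarith

theorem exists_disjoint_subfamily_meets_lower_level {ι α : Type*} (B : ι → Set α) (lev : ι → ℤ)
    (t : Set ι) (hne : ∀ i ∈ t, (B i).Nonempty) (m : ℤ) (hm : ∀ i ∈ t, m ≤ lev i) :
    ∃ u ⊆ t, u.PairwiseDisjoint B ∧
      ∀ i ∈ t, ∃ j ∈ u, (B i ∩ B j).Nonempty ∧ lev j ≤ lev i := by
  -- Vitali with radii `2 ^ (-lev i)`: an enlargement factor `3 / 2 < 2` cannot bridge one level.
  obtain ⟨u, hut, hdisj, hmeet⟩ := Vitali.exists_disjoint_subfamily_covering_enlargement B t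
    (fun i ↦ (2 : ℝ) ^ (-lev i)) (3 / 2) (by norm_num) (fun _ _ ↦ (zpow_pos two_pos _).le)
    (2 ^ (-m)) (fun i hi ↦ zpow_le_zpow_right₀ one_le_two (neg_le_neg (hm i hi))) hne
  refine ⟨u, hut, hdisj, fun i hi ↦ ?_⟩
  obtain ⟨j, hju, hij, hlev⟩ := hmeet i hi
  exact ⟨j, hju, hij, le_of_two_zpow_neg_le_mul hlev⟩

theorem stmt_5_general {Z : Type*} (S : QSStruct Z) (A : Set Z) (𝓑 : Set S.Ball)
    (hcover : A ⊆ ⋃ b ∈ 𝓑, S.rel b)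
    (hlev : ∀ b ∈ 𝓑, S.n₀ ≤ S.lev b) :
    ∃ 𝓒 ⊆ 𝓑, (∀ b ∈ 𝓒, ∀ b' ∈ 𝓒, b ≠ b' → Disjoint (S.rel b) (S.rel b')) ∧
      A ⊆ ⋃ b ∈ 𝓒, S.rel (S.shift (S.q (S.lev b)) b) := by
  obtain ⟨𝓒, h𝓒𝓑, hdisj, hmeet⟩ := exists_disjoint_subfamily_meets_lower_level S.rel S.lev 𝓑
    (fun b _ ↦ S.rel_nonempty b) S.n₀ hlev
  refine ⟨𝓒, h𝓒𝓑, fun b hb b' hb' hne ↦ hdisj hb hb' hne, fun x hx ↦ ?_⟩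
  obtain ⟨b, hb, hxb⟩ := mem_iUnion₂.mp (hcover hx)
  obtain ⟨c, hc, hbc, hcb⟩ := hmeet b hb
  have hsub : S.rel b ⊆ S.rel (S.shift (S.q (S.lev c)) c) :=
    S.sc2 c b (hlev c (h𝓒𝓑 hc)) hcb (inter_comm _ _ ▸ hbc)
  exact mem_iUnion₂.mpr ⟨c, hc, hsub hxb⟩

/-- covering lemma: from a countable cover `𝓑 ⊆ β` of `A` with levels
bounded below one can extract a disjoint subfamily `𝓒` whose `q`-shifts cover `A`. -/
theorem stmt_5 {Z : Type*} (S : QSStruct Z) (A : Set Z) (𝓑 : Set S.Ball)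
    (hcount : 𝓑.Countable) (hcover : A ⊆ ⋃ b ∈ 𝓑, S.rel b)
    (hbdd : BddBelow (S.lev '' 𝓑)) (hlev : ∀ b ∈ 𝓑, S.n₀ ≤ S.lev b) :
    ∃ 𝓒 ⊆ 𝓑, (∀ b ∈ 𝓒, ∀ b' ∈ 𝓒, b ≠ b' → Disjoint (S.rel b) (S.rel b')) ∧
      A ⊆ ⋃ b ∈ 𝓒, S.rel (S.shift (S.q (S.lev b)) b) :=
  stmt_5_general S A 𝓑 hcover hlev
end

section
/- Capacity dominates modulus: let (C, ∂₀C, ∂₁C) be a condenser in an open subset Ω of an O(u)-quasisymmetric structure, and let Γ be any family of curves joining ∂₀C and ∂₁C inside C. If f is a continuous real-valued function on Ω with f ≤ 0 on ∂₀C and f ≥ 1 on ∂₁C, then the gauge φ(a) = diam f(a) is admissible for Γ (i.e. every γ ∈ Γ has Carathéodory 1-measure ≥ 1 with this gauge). Consequently pmod^{ℓ,m}_{p;k}(Γ) ≤ cap^ℓ_{p;k}(C). -/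
open Metric Set
open scoped ENNReal

noncomputable section

/-- A `(m,n)`-round set for the quasisymmetric structure of a metric space. -/
def IsRoundSet {Z : Type*} [MetricSpace Z] (m : ℤ → ℕ) (n : ℤ) (a : Set Z) : Prop :=
  ∃ (x : Z) (j : ℤ), n ≤ j ∧ closedBall x (Real.exp (-(j : ℝ))) ⊆ a ∧
    a ⊆ closedBall x (Real.exp (-((j : ℝ) - m j)))

/-- The Carathéodory measure `Φ_{1;m}` associated with a gauge `φ`. -/
def Car1 {Z : Type*} [MetricSpace Z] (m : ℤ → ℕ) (φ : Set Z → ℝ≥0∞) (A : Set Z) : ℝ≥0∞ :=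
  ⨆ n : ℤ, ⨅ (F : ℕ → Set Z) (_ : A ⊆ ⋃ i, F i) (_ : ∀ i, IsRoundSet m n (F i)),
    ∑' i, φ (F i)

/-- The shifted gauge `φ̃^ℓ(a) = sup{φ(ã) : (a,ã) an ℓ-ring}`. -/
def shiftedGauge {Z : Type*} [MetricSpace Z] (ℓ : ℤ → ℕ) (φ : Set Z → ℝ≥0∞)
    (a : Set Z) : ℝ≥0∞ :=
  ⨆ (A : Set Z) (_ : ∃ (x : Z) (j : ℤ), closedBall x (Real.exp (-(j : ℝ))) ⊆ a ∧
    a ⊆ A ∧ A ⊆ closedBall x (Real.exp (-((j : ℝ) - ℓ j)))), φ A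

/-- A `(k,n)`-outer ring. -/
def IsOuterRing {Z : Type*} [MetricSpace Z] (k : ℤ → ℕ) (n : ℤ) (a : Set Z × Set Z) : Prop :=
  ∃ (x : Z) (j : ℤ), n ≤ j ∧ a.1 ⊆ closedBall x (Real.exp (-(j : ℝ))) ∧
    closedBall x (Real.exp (-((j : ℝ) - k j))) ⊆ a.2

/-- A `(k,n)`-packing centered on `S`. -/
def IsPackingOn {Z : Type*} [MetricSpace Z] (k : ℤ → ℕ) (n : ℤ) (S : Set Z)
    (P : Set (Set Z × Set Z)) : Prop :=
  P.Countable ∧ (∀ a ∈ P, IsOuterRing k n a ∧ (a.1 ∩ S).Nonempty) ∧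
    ∀ a ∈ P, ∀ b ∈ P, (a.2 ∩ b.2).Nonempty → a = b

/-- The shifted packing pre-measure `PΦ̃^ℓ_{p;k}` associated with a gauge `φ`. -/
def PPhi {Z : Type*} [MetricSpace Z] (p : ℝ) (k ℓ : ℤ → ℕ) (φ : Set Z → ℝ≥0∞)
    (S : Set Z) : ℝ≥0∞ :=
  ⨅ n : ℤ, ⨆ (P : Set (Set Z × Set Z)) (_ : IsPackingOn k n S P),
    ∑' a : P, shiftedGauge ℓ φ (a : Set Z × Set Z).1 ^ p

/-- The oscillation gauge `φ(a) = diam f(a)`. -/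
def oscφ {Z : Type*} (f : Z → ℝ) : Set Z → ℝ≥0∞ := fun a => EMetric.diam (f '' a)

/-- The capacity `cap^ℓ_{p;k}(C)` of a condenser, the infimum of the `p`-variation
`𝐕^ℓ_{p;k}(f)(C) = PΦ̃^ℓ_{p;k}[osc f](C)` over admissible potentials `f`. -/
def capacity {Z : Type*} [MetricSpace Z] (p : ℝ) (k ℓ : ℤ → ℕ)
    (Ω C d0 d1 : Set Z) : ℝ≥0∞ :=
  ⨅ (f : Z → ℝ) (_ : ContinuousOn f Ω ∧
      (∀ Kc : Set Z, Kc ⊆ Ω → IsCompact Kc → PPhi p k ℓ (oscφ f) Kc ≠ ⊤) ∧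
      (∀ x ∈ d0, f x ≤ 0) ∧ (∀ x ∈ d1, 1 ≤ f x)),
    PPhi p k ℓ (oscφ f) C

/-
By the intermediate value theorem, a potential `f` that is `≤ 0` at the start and `≥ 1` at the
end of a curve `γ` satisfies `[0, 1] ⊆ f(γ)`. Hence for every countable cover `(a_i)` of `γ`,
`∑ diam f(a_i) ≥ ∑ λ(f(a_i)) ≥ λ(⋃ f(a_i)) ≥ 1`, whatever the roundness constraint on the
covers: the gauge `diam ∘ f` is admissible for every curve of `Γ`, so the modulus, an infimum
over admissible gauges, is at most the capacity, an infimum over potentials.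
-/

theorem ofReal_sub_le_tsum_ediam_of_Icc_subset {ι : Type*} [Countable ι] {a b : ℝ}
    (s : ι → Set ℝ) (h : Icc a b ⊆ ⋃ i, s i) :
    ENNReal.ofReal (b - a) ≤ ∑' i, ediam (s i) :=
  calc ENNReal.ofReal (b - a) = MeasureTheory.volume (Icc a b) := Real.volume_Icc.symm
    _ ≤ MeasureTheory.volume (⋃ i, s i) := MeasureTheory.measure_mono h
    _ ≤ ∑' i, MeasureTheory.volume (s i) := MeasureTheory.measure_iUnion_le _
    _ ≤ ∑' i, ediam (s i) := ENNReal.tsum_le_tsum fun _ => Real.volume_le_diam _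

theorem Icc_subset_image_image_of_continuousOn {Z : Type*} [TopologicalSpace Z]
    {f : Z → ℝ} {c : ℝ → Z} (hc : ContinuousOn c (Icc 0 1))
    (hf : ContinuousOn f (c '' Icc 0 1)) {a b : ℝ} (ha : f (c 0) ≤ a) (hb : b ≤ f (c 1)) :
    Icc a b ⊆ f '' (c '' Icc 0 1) := by
  rw [image_image]
  exact (Icc_subset_Icc ha hb).trans
    (intermediate_value_Icc zero_le_one (hf.comp hc (mapsTo_image c _)))

theorem le_Car1_of_le_tsum {Z : Type*} [MetricSpace Z] {m : ℤ → ℕ} {φ : Set Z → ℝ≥0∞}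
    {A : Set Z} {r : ℝ≥0∞} (h : ∀ F : ℕ → Set Z, A ⊆ ⋃ i, F i → r ≤ ∑' i, φ (F i)) :
    r ≤ Car1 m φ A :=
  le_iSup_of_le 0 <| le_iInf₂ fun F hF => le_iInf fun _ => h F hF

theorem one_le_Car1_oscφ_image {Z : Type*} [MetricSpace Z] (m : ℤ → ℕ) {f : Z → ℝ}
    {c : ℝ → Z} (hc : ContinuousOn c (Icc 0 1)) (hf : ContinuousOn f (c '' Icc 0 1))
    (h0 : f (c 0) ≤ 0) (h1 : 1 ≤ f (c 1)) :
    1 ≤ Car1 m (oscφ f) (c '' Icc 0 1) := by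
  refine le_Car1_of_le_tsum fun F hF => ?_
  have hcover : Icc 0 1 ⊆ ⋃ i, f '' F i :=
    (Icc_subset_image_image_of_continuousOn hc hf h0 h1).trans
      ((image_mono hF).trans (image_iUnion).subset)
  have hsum : (1 : ℝ≥0∞) ≤ ∑' i, ediam (f '' F i) := by
    simpa using ofReal_sub_le_tsum_ediam_of_Icc_subset _ hcover
  -- `oscφ` is written with `EMetric.diam`, a deprecated alias of `ediam`, so only `exact` sees it.
  exact hsum

theorem stmt_11_general {Z : Type*} [MetricSpace Z] (p : ℝ) (k ℓ m : ℤ → ℕ)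
    (Ω C d0 d1 : Set Z) (hCsub : closure C ⊆ Ω)
    (hd0sub : d0 ⊆ closure C \ C) (hd1sub : d1 ⊆ closure C \ C)
    (Γ : Set (Set Z))
    (hΓ : ∀ γ ∈ Γ, ∃ c : ℝ → Z, ContinuousOn c (Icc 0 1) ∧ c 0 ∈ d0 ∧ c 1 ∈ d1 ∧
      γ = c '' Icc 0 1 ∧ γ ⊆ C ∪ d0 ∪ d1) :
    (∀ f : Z → ℝ, ContinuousOn f Ω → (∀ x ∈ d0, f x ≤ 0) → (∀ x ∈ d1, 1 ≤ f x) →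
      ∀ γ ∈ Γ, 1 ≤ Car1 m (oscφ f) γ) ∧
    (⨅ (φ : Set Z → ℝ≥0∞) (_ : ∀ γ ∈ Γ, 1 ≤ Car1 m φ γ), PPhi p k ℓ φ C) ≤
      capacity p k ℓ Ω C d0 d1 := by
  have hadm : ∀ f : Z → ℝ, ContinuousOn f Ω → (∀ x ∈ d0, f x ≤ 0) →
      (∀ x ∈ d1, 1 ≤ f x) → ∀ γ ∈ Γ, 1 ≤ Car1 m (oscφ f) γ := by
    rintro f hf h0 h1 γ hγ
    obtain ⟨c, hc, hc0, hc1, rfl, hγsub⟩ := hΓ γ hγ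
    have hγΩ : c '' Icc 0 1 ⊆ Ω :=
      hγsub.trans <| (union_subset (union_subset subset_closure fun x hx => (hd0sub hx).1)
        fun x hx => (hd1sub hx).1).trans hCsub
    exact one_le_Car1_oscφ_image m hc (hf.mono hγΩ) (h0 _ hc0) (h1 _ hc1)
  refine ⟨hadm, le_iInf₂ fun f hf => ?_⟩
  exact iInf₂_le (oscφ f) (hadm f hf.1 hf.2.2.1 hf.2.2.2)

/-- for a condenser `(C, ∂₀C, ∂₁C)` in an open set `Ω` and a family `Γ`
of curves joining `∂₀C` to `∂₁C` in `C`: any admissible potential `f` gives an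
admissible gauge `a ↦ diam f(a)` for `Γ`, and `pmod^{ℓ,m}_{p;k}(Γ) ≤ cap^ℓ_{p;k}(C)`. -/
theorem stmt_11 {Z : Type*} [MetricSpace Z] (p : ℝ) (hp : 1 ≤ p) (k ℓ m : ℤ → ℕ)
    (Ω C d0 d1 : Set Z) (hΩ : IsOpen Ω) (hCsub : closure C ⊆ Ω)
    (hCc : IsCompact (closure C)) (hd0 : IsClosed d0) (hd1 : IsClosed d1)
    (hdisj : Disjoint d0 d1) (hd0sub : d0 ⊆ closure C \ C) (hd1sub : d1 ⊆ closure C \ C)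
    (Γ : Set (Set Z))
    (hΓ : ∀ γ ∈ Γ, ∃ c : ℝ → Z, ContinuousOn c (Icc 0 1) ∧ c 0 ∈ d0 ∧ c 1 ∈ d1 ∧
      γ = c '' Icc 0 1 ∧ γ ⊆ C ∪ d0 ∪ d1) :
    (∀ f : Z → ℝ, ContinuousOn f Ω → (∀ x ∈ d0, f x ≤ 0) → (∀ x ∈ d1, 1 ≤ f x) →
      ∀ γ ∈ Γ, 1 ≤ Car1 m (oscφ f) γ) ∧
    (⨅ (φ : Set Z → ℝ≥0∞) (_ : ∀ γ ∈ Γ, 1 ≤ Car1 m φ γ), PPhi p k ℓ φ C) ≤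
      capacity p k ℓ Ω C d0 d1 :=
  stmt_11_general p k ℓ m Ω C d0 d1 hCsub hd0sub hd1sub Γ hΓ
end
end

section
/- Let α be a diagonalizable linear map on ℝ^d with positive real eigenvalues, let λ > 0 and v ∈ ker(α − λ) nonzero. Consider the family Γ_v of lines parallel to v with the translation-invariant measure ω_v on the quotient ℝ^d/ℝv. Then for any Borel set A of lines, ω_v(e^{tα}A) = e^{t(tr(α) − λ)}·ω_v(A) for all t ∈ ℝ. -/
/-!
The map `e^{tα}` preserves both `W` and the line `ℝv`, so its determinant is the product of
the determinants of its two restrictions. On `ℝv` it is multiplication by `e^{tλ}`, and in an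
eigenbasis of `α` its determinant is `∏ e^{tμᵢ} = e^{t tr α}`. Hence its restriction to `W` has
determinant `e^{t(tr α − λ)}`, the factor by which it scales any Haar measure on `W`.
-/

open MeasureTheory

theorem ContinuousLinearMap.exp_apply_of_apply_eq_smul {𝕂 E : Type*} [RCLike 𝕂]
    [NormedAddCommGroup E] [NormedSpace 𝕂 E] [CompleteSpace E]
    {A : E →L[𝕂] E} {c : 𝕂} {x : E} (h : A x = c • x) :
    NormedSpace.exp A x = NormedSpace.exp c • x := by
  have hpow : ∀ n : ℕ, (A ^ n) x = c ^ n • x := by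
    intro n
    induction n with
    | zero => simp
    | succ n ih =>
      rw [pow_succ', mul_def, comp_apply, ih, map_smul, h, smul_smul, pow_succ]
  have hA := (NormedSpace.exp_series_hasSum_exp' (𝕂 := 𝕂) A).mapL (apply 𝕂 E x)
  have hc := (NormedSpace.exp_series_hasSum_exp' (𝕂 := 𝕂) c).smul_const x
  refine hA.unique ?_
  simpa only [apply_apply, smul_apply, hpow, smul_smul, smul_eq_mul] using hc

namespace LinearMap

section Eigenbasis

variable {ι R M : Type*} [Fintype ι] [CommRing R] [AddCommGroup M] [Module R M]
  (b : Module.Basis ι R M) {f : M →ₗ[R] M} {c : ι → R}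

theorem toMatrix_eq_diagonal_of_apply_basis [DecidableEq ι] (h : ∀ i, f (b i) = c i • b i) :
    toMatrix b b f = Matrix.diagonal c := by
  ext i j
  by_cases hij : i = j
  · subst hij
    simp [toMatrix_apply, h]
  · simp [toMatrix_apply, h, hij]

theorem det_eq_prod_of_apply_basis (h : ∀ i, f (b i) = c i • b i) :
    LinearMap.det f = ∏ i, c i := by
  classical
  rw [← det_toMatrix b, toMatrix_eq_diagonal_of_apply_basis b h, Matrix.det_diagonal]

theorem trace_eq_sum_of_apply_basis (h : ∀ i, f (b i) = c i • b i) :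
    trace R M f = ∑ i, c i := by
  classical
  rw [trace_eq_matrix_trace R b, toMatrix_eq_diagonal_of_apply_basis b h, Matrix.trace_diagonal]

end Eigenbasis

theorem det_exp_eq_exp_trace_of_apply_basis {ι E : Type*} [Fintype ι]
    [NormedAddCommGroup E] [NormedSpace ℝ E] [FiniteDimensional ℝ E]
    (b : Module.Basis ι ℝ E) {A : E →L[ℝ] E} {c : ι → ℝ} (h : ∀ i, A (b i) = c i • b i) :
    LinearMap.det (NormedSpace.exp A).toLinearMap =
      Real.exp (trace ℝ E A.toLinearMap) := by
  have hexp : ∀ i, NormedSpace.exp A (b i) = Real.exp (c i) • b i := fun i => by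
    rw [Real.exp_eq_exp_ℝ]
    exact ContinuousLinearMap.exp_apply_of_apply_eq_smul (h i)
  rw [det_eq_prod_of_apply_basis b hexp, trace_eq_sum_of_apply_basis b h, Real.exp_sum]

theorem det_eq_det_restrict_mul_det_restrict {K V : Type*} [Field K] [AddCommGroup V]
    [Module K V] [FiniteDimensional K V] {f : V →ₗ[K] V} {p q : Submodule K V}
    (hpq : IsCompl p q) (hp : ∀ x ∈ p, f x ∈ p) (hq : ∀ x ∈ q, f x ∈ q) :
    LinearMap.det f = LinearMap.det (f.restrict hp) * LinearMap.det (f.restrict hq) := by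
  let e := Submodule.prodEquivOfIsCompl p q hpq
  have hconj : f = e.conj ((f.restrict hp).prodMap (f.restrict hq)) := by
    ext x
    obtain ⟨⟨y, z⟩, rfl⟩ := e.surjective x
    simp [e, LinearEquiv.conj_apply]
  conv_lhs => rw [hconj]
  rw [LinearEquiv.conj_apply, comp_assoc, det_conj, det_prodMap]

theorem det_restrict_span_singleton {K V : Type*} [Field K] [AddCommGroup V] [Module K V]
    {f : V →ₗ[K] V} {v : V} {c : K} (hv : v ≠ 0) (hfv : f v = c • v)
    (hq : ∀ x ∈ K ∙ v, f x ∈ K ∙ v) : LinearMap.det (f.restrict hq) = c := by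
  have hsmul : f.restrict hq = c • LinearMap.id := by
    ext ⟨x, hx⟩
    obtain ⟨a, rfl⟩ := Submodule.mem_span_singleton.1 hx
    simp [hfv, smul_comm a c]
  rw [hsmul, det_smul, det_id, mul_one, finrank_span_singleton hv, pow_one]

end LinearMap

theorem stmt_13_general {d : ℕ}
    (α : EuclideanSpace ℝ (Fin d) →L[ℝ] EuclideanSpace ℝ (Fin d))
    (hdiag : ∃ (b : Module.Basis (Fin d) ℝ (EuclideanSpace ℝ (Fin d))) (μs : Fin d → ℝ),
      (∀ i, 0 < μs i) ∧ ∀ i, α (b i) = μs i • b i)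
    (lam : ℝ)
    (v : EuclideanSpace ℝ (Fin d)) (hv : v ≠ 0) (hEig : α v = lam • v)
    (W : Submodule ℝ (EuclideanSpace ℝ (Fin d)))
    (hcompl : IsCompl W (Submodule.span ℝ {v}))
    (hExpInv : ∀ (t : ℝ), ∀ x ∈ W, (NormedSpace.exp (t • α)) x ∈ W)
    (μ : Measure W) [μ.IsAddHaarMeasure] (t : ℝ) (A : Set W) :
    μ ((fun w : W => (⟨NormedSpace.exp (t • α) (w : EuclideanSpace ℝ (Fin d)),
        hExpInv t w w.2⟩ : W)) '' A) =
      ENNReal.ofReal (Real.exp (t * (LinearMap.trace ℝ (EuclideanSpace ℝ (Fin d))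
        α.toLinearMap - lam))) * μ A := by
  obtain ⟨b, μs, -, hb⟩ := hdiag
  set f := NormedSpace.exp (t • α)
  have hfv : f v = Real.exp (t * lam) • v := by
    rw [Real.exp_eq_exp_ℝ]
    exact ContinuousLinearMap.exp_apply_of_apply_eq_smul (by simp [hEig, smul_smul])
  have hdet : LinearMap.det f.toLinearMap =
      Real.exp (t * LinearMap.trace ℝ _ α.toLinearMap) := by
    rw [LinearMap.det_exp_eq_exp_trace_of_apply_basis b (c := fun i => t * μs i)
      (fun i => by simp [hb i, smul_smul]), ContinuousLinearMap.toLinearMap_smul, map_smul,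
      smul_eq_mul]
  have hline : ∀ x ∈ ℝ ∙ v, f x ∈ ℝ ∙ v := fun x hx => by
    obtain ⟨a, rfl⟩ := Submodule.mem_span_singleton.1 hx
    rw [map_smul, hfv, smul_comm]
    exact Submodule.smul_mem _ _ hx
  have hdetW : LinearMap.det (f.toLinearMap.restrict (hExpInv t)) =
      Real.exp (t * (LinearMap.trace ℝ _ α.toLinearMap - lam)) := by
    have hsplit := LinearMap.det_eq_det_restrict_mul_det_restrict hcompl (hExpInv t) hline
    rw [hdet, LinearMap.det_restrict_span_singleton hv hfv] at hsplit
    rw [mul_sub, Real.exp_sub, hsplit, mul_div_cancel_right₀ _ (Real.exp_ne_zero _)]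
  change μ (f.toLinearMap.restrict (hExpInv t) '' A) = _
  rw [Measure.addHaar_image_linearMap, hdetW, abs_of_pos (Real.exp_pos _)]

/-- equivariance of the measure on the family of eigencurves. If `α` is
diagonalizable with positive eigenvalues, `v` an eigenvector for the eigenvalue `λ`,
and `W` an `α`-invariant complement of `ℝv` (parametrizing the lines parallel to `v`),
then any additive Haar measure `ω_v` on `W` satisfies
`ω_v(e^{tα} A) = e^{t(tr α − λ)} ω_v(A)`. -/
theorem stmt_13 {d : ℕ}
    (α : EuclideanSpace ℝ (Fin d) →L[ℝ] EuclideanSpace ℝ (Fin d))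
    (hdiag : ∃ (b : Module.Basis (Fin d) ℝ (EuclideanSpace ℝ (Fin d))) (μs : Fin d → ℝ),
      (∀ i, 0 < μs i) ∧ ∀ i, α (b i) = μs i • b i)
    (lam : ℝ) (hlam : 0 < lam)
    (v : EuclideanSpace ℝ (Fin d)) (hv : v ≠ 0) (hEig : α v = lam • v)
    (W : Submodule ℝ (EuclideanSpace ℝ (Fin d)))
    (hWinv : ∀ x ∈ W, α x ∈ W)
    (hcompl : IsCompl W (Submodule.span ℝ {v}))
    (hExpInv : ∀ (t : ℝ), ∀ x ∈ W, (NormedSpace.exp (t • α)) x ∈ W)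
    (μ : Measure W) [μ.IsAddHaarMeasure] (t : ℝ) (A : Set W) (hA : MeasurableSet A) :
    μ ((fun w : W => (⟨NormedSpace.exp (t • α) (w : EuclideanSpace ℝ (Fin d)),
        hExpInv t w w.2⟩ : W)) '' A) =
      ENNReal.ofReal (Real.exp (t * (LinearMap.trace ℝ (EuclideanSpace ℝ (Fin d))
        α.toLinearMap - lam))) * μ A :=
  stmt_13_general α hdiag lam v hv hEig W hcompl hExpInv μ t A
end

section
/- Let α = diag(μ₁,...,μ_d) be a diagonal matrix with all μ_i ≥ 1, fix i, and let f : ℝ^d → ℝ be the i-th coordinate function. Equip ℝ^d with the family of boxes b̂ = x + e^{-nα}([−1/2,1/2]^d). Then for p > tr(α)/μ_i, ε > 0 with p = (1+ε)tr(α)/μ_i, any sublinear ℓ, and n large enough: for every finite family of disjoint boxes {b̂_j} of levels ≥ n all meeting [−1/2,1/2]^d, Σ_j (e^{ℓ(δ(b_j))}·osc(f, b̂_j))^p ≤ 2^d. In particular the coordinate function f has locally bounded (p; k, ℓ)-variation for all such p. -/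
/-!
A box of level `m` has `i₀`-th side `e^{-m μ_{i₀}}` and volume `e^{-m tr α}`. Sublinearity of `ℓ`
gives `p ℓ(m) ≤ ε tr(α) m` for large `m`, and since `p μ_{i₀} = (1 + ε) tr α` this makes each term
`(e^{ℓ(m)} e^{-m μ_{i₀}})^p` at most the volume of its box. Once `m ≥ 1` the sides are at most
`e^{-1} < 1/2`, so a box meeting `[-1/2,1/2]^d` lies in `[-1,1]^d`, and disjointness bounds the
total volume by `2^d`.
-/

open Filter Set

noncomputable section

/-- The box `x + e^{-nα}([-1/2,1/2]^d)` for the diagonal matrix `α = diag(μvec)`. -/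
def boxAt {d : ℕ} (μvec : Fin d → ℝ) (x : Fin d → ℝ) (n : ℤ) : Set (Fin d → ℝ) :=
  (fun y => x + fun j => Real.exp (-(n : ℝ) * μvec j) * y j) ''
    {y : Fin d → ℝ | ∀ j, y j ∈ Icc (-(1 : ℝ) / 2) (1 / 2)}

open MeasureTheory

section boxAt

variable {d : ℕ} (μvec : Fin d → ℝ) (x : Fin d → ℝ) (n : ℤ)

lemma boxAt_eq_pi :
    boxAt μvec x n = univ.pi fun j =>
      Icc (x j - Real.exp (-n * μvec j) / 2) (x j + Real.exp (-n * μvec j) / 2) := by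
  have hmap : (fun y => x + fun j => Real.exp (-(n : ℝ) * μvec j) * y j) =
      Pi.map fun j => (Real.exp (-n * μvec j) * · + x j) := by
    ext y j; simp [add_comm]
  have hcube : {y : Fin d → ℝ | ∀ j, y j ∈ Icc (-(1 : ℝ) / 2) (1 / 2)} =
      univ.pi fun _ => Icc (-(1 : ℝ) / 2) (1 / 2) := by
    ext; simp only [mem_ofPred_eq, mem_univ_pi]
  rw [boxAt, hmap, hcube, piMap_image_univ_pi]
  congr! with j
  rw [image_affine_Icc' (Real.exp_pos _)]
  congr 1 <;> ring

lemma image_eval_boxAt (i : Fin d) :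
    (fun y : Fin d → ℝ => y i) '' boxAt μvec x n =
      Icc (x i - Real.exp (-n * μvec i) / 2) (x i + Real.exp (-n * μvec i) / 2) := by
  rw [boxAt_eq_pi]
  refine eval_image_univ_pi ⟨x, fun j _ => ?_⟩
  have := Real.exp_pos (-n * μvec j)
  constructor <;> linarith

lemma diam_image_eval_boxAt (i : Fin d) :
    Metric.diam ((fun y : Fin d → ℝ => y i) '' boxAt μvec x n) = Real.exp (-n * μvec i) := by
  rw [image_eval_boxAt, Real.diam_Icc] <;> linarith [Real.exp_pos (-n * μvec i)]

lemma measurableSet_boxAt :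
    MeasurableSet (boxAt μvec x n) := by
  rw [boxAt_eq_pi]
  exact .univ_pi fun _ => measurableSet_Icc

lemma volume_boxAt :
    volume (boxAt μvec x n) = ENNReal.ofReal (Real.exp (-n * ∑ j, μvec j)) := by
  simp_rw [boxAt_eq_pi, volume_pi_pi, Real.volume_Icc, add_sub_sub_cancel, add_halves,
    Finset.mul_sum, Real.exp_sum]
  exact (ENNReal.ofReal_prod_of_nonneg fun j _ => (Real.exp_pos _).le).symm

lemma boxAt_subset_pi_Icc
    (hside : ∀ j, Real.exp (-n * μvec j) ≤ 1 / 2)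
    (hmeet : (boxAt μvec x n ∩ {y | ∀ j, y j ∈ Icc (-(1 : ℝ) / 2) (1 / 2)}).Nonempty) :
    boxAt μvec x n ⊆ univ.pi fun _ => Icc (-1 : ℝ) 1 := by
  obtain ⟨z, hzbox, hzcube⟩ := hmeet
  rw [boxAt_eq_pi] at hzbox ⊢
  intro w hw j _
  have := hside j
  obtain ⟨hz₁, hz₂⟩ := hzbox j (mem_univ j)
  obtain ⟨hc₁, hc₂⟩ := hzcube j
  obtain ⟨hw₁, hw₂⟩ := hw j (mem_univ j)
  constructor <;> linarith

end boxAt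

lemma exp_neg_mul_le_half {m μ : ℝ} (hm : 1 ≤ m) (hμ : 1 ≤ μ) : Real.exp (-m * μ) ≤ 1 / 2 :=
  calc Real.exp (-m * μ) ≤ Real.exp (-1) := Real.exp_le_exp.mpr (by nlinarith)
    _ ≤ 1 / 2 := Real.exp_neg_one_lt_half.le

lemma sum_exp_neg_mul_sum_le_two_pow {ι : Type*} {d : ℕ} {μvec : Fin d → ℝ}
    (hμ : ∀ j, 1 ≤ μvec j) {s : Finset ι} {x : ι → Fin d → ℝ} {lev : ι → ℤ} (hlev : ∀ i ∈ s, 1 ≤ lev i)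
    (hmeet : ∀ i ∈ s,
      (boxAt μvec (x i) (lev i) ∩ {y | ∀ j, y j ∈ Icc (-(1 : ℝ) / 2) (1 / 2)}).Nonempty)
    (hdisj : (s : Set ι).PairwiseDisjoint fun i => boxAt μvec (x i) (lev i)) :
    ∑ i ∈ s, Real.exp (-lev i * ∑ j, μvec j) ≤ 2 ^ d := by
  have hsub : ⋃ i ∈ s, boxAt μvec (x i) (lev i) ⊆ univ.pi fun _ => Icc (-1 : ℝ) 1 :=
    iUnion₂_subset fun i hi => boxAt_subset_pi_Icc μvec (x i) (lev i)
      (fun j => exp_neg_mul_le_half (by exact_mod_cast hlev i hi) (hμ j)) (hmeet i hi)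
  have hvol : ∑ i ∈ s, volume (boxAt μvec (x i) (lev i)) ≤ 2 ^ d := by
    rw [← measure_biUnion_finset hdisj fun i _ => measurableSet_boxAt μvec (x i) (lev i)]
    refine (measure_mono hsub).trans_eq ?_
    rw [volume_pi_pi]
    simp only [Real.volume_Icc, sub_neg_eq_add, Finset.prod_const, Finset.card_univ,
      Fintype.card_fin]
    norm_num
  simp_rw [volume_boxAt] at hvol
  rw [← ENNReal.ofReal_sum_of_nonneg fun i _ => (Real.exp_pos _).le] at hvol
  exact (ENNReal.ofReal_le_iff_le_toReal (by simp)).mp hvol |>.trans_eq (by simp)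

lemma rpow_exp_mul_exp_le {a m μ T p ε : ℝ} (hpμ : p * μ = (1 + ε) * T)
    (ha : p * a ≤ ε * T * m) :
    (Real.exp a * Real.exp (-m * μ)) ^ p ≤ Real.exp (-m * T) := by
  rw [← Real.exp_add, ← Real.exp_mul, Real.exp_le_exp,
    show (a + -m * μ) * p = p * a - m * (p * μ) by ring, hpμ]
  linarith

lemma eventually_le_mul_of_tendsto_div_zero {f : ℤ → ℝ}
    (hf : Tendsto (fun n : ℤ => f n / n) atTop (nhds 0)) {c : ℝ} (hc : 0 < c) :
    ∀ᶠ n : ℤ in atTop, f n ≤ c * n := by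
  filter_upwards [hf.eventually (gt_mem_nhds hc), eventually_gt_atTop 0] with n hn hpos
  rw [div_lt_iff₀ (by exact_mod_cast hpos)] at hn
  exact hn.le

/-- with `α = diag(μ₁,…,μ_d)`, all `μ_i ≥ 1`, `f` the `i₀`-th coordinate
function, `p = (1+ε)·tr(α)/μ_{i₀}` and `ℓ` sublinear, for `n` large enough every finite
disjoint family of boxes of levels `≥ n` meeting `[-1/2,1/2]^d` satisfies
`Σ (e^{ℓ(level)}·osc(f, box))^p ≤ 2^d`. -/
theorem stmt_16 (d : ℕ) (μvec : Fin d → ℝ) (hμ : ∀ i, 1 ≤ μvec i) (i₀ : Fin d)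
    (ε : ℝ) (hε : 0 < ε) (p : ℝ) (hp : p = (1 + ε) * (∑ i, μvec i) / μvec i₀)
    (ℓ : ℤ → ℕ) (hℓ : Tendsto (fun n : ℤ => (ℓ n : ℝ) / n) atTop (nhds 0)) :
    ∃ N : ℤ, ∀ n : ℤ, N ≤ n →
      ∀ (s : Finset ℕ) (x : ℕ → Fin d → ℝ) (lev : ℕ → ℤ),
        (∀ i ∈ s, n ≤ lev i) →
        (∀ i ∈ s, (boxAt μvec (x i) (lev i) ∩
          {y : Fin d → ℝ | ∀ j, y j ∈ Icc (-(1 : ℝ) / 2) (1 / 2)}).Nonempty) →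
        (∀ i ∈ s, ∀ j ∈ s, i ≠ j →
          Disjoint (boxAt μvec (x i) (lev i)) (boxAt μvec (x j) (lev j))) →
        ∑ i ∈ s, (Real.exp (ℓ (lev i)) *
            Metric.diam ((fun y : Fin d → ℝ => y i₀) '' boxAt μvec (x i) (lev i))) ^ p
          ≤ (2 : ℝ) ^ d := by
  set T := ∑ i, μvec i
  have hμ₀ : 0 < μvec i₀ := one_pos.trans_le (hμ i₀)
  have hT : 0 < T := Finset.sum_pos (fun i _ => one_pos.trans_le (hμ i)) ⟨i₀, Finset.mem_univ _⟩
  have hp₀ : 0 < p := by rw [hp]; positivity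
  have hpμ : p * μvec i₀ = (1 + ε) * T := by rw [hp]; field_simp
  obtain ⟨N, hN⟩ := eventually_atTop.mp <|
    (eventually_le_mul_of_tendsto_div_zero hℓ (c := ε * T / p) (by positivity)).and
      (eventually_ge_atTop 1)
  refine ⟨N, fun n hn s x lev hlev hmeet hdisj => ?_⟩
  have hN' : ∀ i ∈ s, (ℓ (lev i) : ℝ) ≤ ε * T / p * lev i ∧ 1 ≤ lev i :=
    fun i hi => hN (lev i) (hn.trans (hlev i hi))
  calc _ ≤ ∑ i ∈ s, Real.exp (-lev i * T) := by
        refine Finset.sum_le_sum fun i hi => ?_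
        rw [diam_image_eval_boxAt]
        refine rpow_exp_mul_exp_le hpμ ?_
        have := (hN' i hi).1
        rw [div_mul_eq_mul_div, le_div_iff₀ hp₀] at this
        linarith
    _ ≤ 2 ^ d := sum_exp_neg_mul_sum_le_two_pow hμ (fun i hi => (hN' i hi).2) hmeet
          fun i hi j hj hij => hdisj i hi j hj hij
end
end
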